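/- arXiv:1602.02543 — 2 statements merged into one kernel-verified Lean document; each statement's English description precedes it below -/
import Mathlib

section
/- Let M and M' be two mean partitions of the sample (X_1,…,X_n) of partitions. Then there exist representatives A_i and A_i' of X_i for each i such that δ(M, M') ≤ (1/n)·Σ_{j ∈ J} ‖A_j − A_j'‖, where J = { j ∈ {1,…,n} : A_j ≠ A_j' }. -/
open scoped BigOperators
open MeasureTheory

noncomputable section

/-- Matrices as points of the Euclidean space `ℝ^{ℓ×m}` with the Frobenius norm. -/
abbrev Mat (l m : ℕ) := EuclideanSpace ℝ (Fin l × Fin m)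

/-- `A` is a representation matrix: entries in `[0,1]` and each column sums to `1`. -/
def IsRep {l m : ℕ} (A : Mat l m) : Prop :=
  (∀ p, 0 ≤ A p ∧ A p ≤ 1) ∧ ∀ j : Fin m, ∑ k : Fin l, A (k, j) = 1

/-- The representation space `𝒳`. -/
abbrev RepSpace (l m : ℕ) := {A : Mat l m // IsRep A}

/-- Action of a permutation on a matrix by permuting rows. -/
def permAct {l m : ℕ} (σ : Equiv.Perm (Fin l)) (A : Mat l m) : Mat l m :=
  WithLp.toLp 2 (fun p : Fin l × Fin m => A (σ⁻¹ p.1, p.2))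

lemma isRep_permAct {l m : ℕ} (σ : Equiv.Perm (Fin l)) {A : Mat l m} (hA : IsRep A) :
    IsRep (permAct σ A) := by
  refine ⟨fun p => hA.1 _, fun j => ?_⟩
  have h := Equiv.sum_comp σ⁻¹ (fun k => A (k, j))
  simpa [permAct] using h.trans (hA.2 j)

instance {l m : ℕ} : SMul (Equiv.Perm (Fin l)) (RepSpace l m) :=
  ⟨fun σ A => ⟨permAct σ A.1, isRep_permAct σ A.2⟩⟩

lemma smul_rep_def {l m : ℕ} (σ : Equiv.Perm (Fin l)) (A : RepSpace l m) :
    (σ • A).1 = permAct σ A.1 := rfl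

instance {l m : ℕ} : MulAction (Equiv.Perm (Fin l)) (RepSpace l m) where
  one_smul A := Subtype.ext rfl
  mul_smul σ τ A := Subtype.ext rfl

/-- Two representation matrices are equivalent iff they lie in the same `Π`-orbit. -/
instance pSetoid (l m : ℕ) : Setoid (RepSpace l m) :=
  MulAction.orbitRel (Equiv.Perm (Fin l)) (RepSpace l m)

/-- The partition space `𝒫 = 𝒳/Π`. -/
abbrev PSpace (l m : ℕ) := Quotient (pSetoid l m)

/-- The intrinsic metric `δ` on `𝒫`: the minimal Euclidean distance between representatives. -/
def pdist {l m : ℕ} (X Y : PSpace l m) : ℝ :=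
  sInf {d | ∃ A B : RepSpace l m, ⟦A⟧ = X ∧ ⟦B⟧ = Y ∧ d = dist A B}

/-- The degree of asymmetry `α` of the partition represented by `A`:
`min {‖A - σ·A‖ : σ ≠ id}`. -/
def alpha {l m : ℕ} (A : RepSpace l m) : ℝ :=
  sInf {d | ∃ σ : Equiv.Perm (Fin l), σ ≠ 1 ∧ d = dist A (σ • A)}

/-- The closed ball in the partition space. -/
def pBall {l m : ℕ} (Z : PSpace l m) (r : ℝ) : Set (PSpace l m) :=
  {X | pdist X Z ≤ r}

/-- The metric topology on `𝒫` generated by the open balls of `δ`. -/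
instance {l m : ℕ} : TopologicalSpace (PSpace l m) :=
  TopologicalSpace.generateFrom {s | ∃ (Z : PSpace l m) (r : ℝ), s = {X | pdist X Z < r}}

instance {l m : ℕ} : MeasurableSpace (PSpace l m) := borel _

/-- `B(Z, r)` is a homogeneous ball: there is a bijective isometry onto the closed ball of
radius `r` in `𝒳` centered at a representative of `Z`. -/
def IsHomBall {l m : ℕ} (Z : PSpace l m) (r : ℝ) : Prop :=
  ∃ A : RepSpace l m, ⟦A⟧ = Z ∧
    ∃ φ : pBall Z r → {B : RepSpace l m | dist B A ≤ r},
      Function.Bijective φ ∧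
        ∀ X Y : pBall Z r,
          dist (φ X : RepSpace l m) (φ Y : RepSpace l m) =
            pdist (X : PSpace l m) (Y : PSpace l m)

/-- The `k`-th row of a representation matrix, as a point of Euclidean space `ℝ^m`. -/
def rowOf {l m : ℕ} (A : RepSpace l m) (k : Fin l) : EuclideanSpace ℝ (Fin m) :=
  WithLp.toLp 2 (fun j => A.1 (k, j))

/-- The support of a measure: the smallest closed set of full measure. -/
def msupport {l m : ℕ} (Q : Measure (PSpace l m)) : Set (PSpace l m) :=
  ⋂₀ {S | IsClosed S ∧ Q S = 1}

/-- The Dirichlet fundamental domain centered at `A`. -/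
def DirDom {l m : ℕ} (A : RepSpace l m) : Set (RepSpace l m) :=
  {B | ∀ σ : Equiv.Perm (Fin l), dist B A ≤ dist B (σ • A)}

/-!
A representative `W` of a mean partition is the Euclidean mean of the sample representatives
`A i` aligned optimally to `W`: otherwise, by the variance decomposition
`∑ ‖A i - W‖² = ∑ ‖A i - c‖² + n ‖c - W‖²` around their mean `c`, the partition of `c` would
have a strictly smaller Fréchet function. Hence for representatives `W`, `W'` of two mean
partitions, `δ(M, M') ≤ ‖W - W'‖ = ‖(1/n) ∑ (A i - A' i)‖ ≤ (1/n) ∑ ‖A i - A' i‖`, and the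
terms with `A i = A' i` vanish.
-/

section InnerProductSpace

variable {ι E : Type*} [Fintype ι] [Nonempty ι] [NormedAddCommGroup E] [InnerProductSpace ℝ E]

lemma sum_norm_sub_sq_eq_sum_norm_sub_mean_sq_add (a : ι → E) (w : E) :
    ∑ i, ‖a i - w‖ ^ 2 =
      ∑ i, ‖a i - (Fintype.card ι : ℝ)⁻¹ • ∑ j, a j‖ ^ 2 +
        Fintype.card ι * ‖(Fintype.card ι : ℝ)⁻¹ • ∑ j, a j - w‖ ^ 2 := by
  set c := (Fintype.card ι : ℝ)⁻¹ • ∑ j, a j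
  have hc : ∑ i, (a i - c) = 0 := by
    rw [Finset.sum_sub_distrib, Finset.sum_const, Finset.card_univ, ← Nat.cast_smul_eq_nsmul ℝ,
      smul_smul, mul_inv_cancel₀ (by positivity), one_smul, sub_self]
  have hsplit : ∀ i, ‖a i - w‖ ^ 2 = ‖a i - c‖ ^ 2 + 2 * inner ℝ (a i - c) (c - w) + ‖c - w‖ ^ 2 :=
    fun i => by rw [← norm_add_sq_real, sub_add_sub_cancel]
  simp_rw [hsplit]
  rw [Finset.sum_add_distrib, Finset.sum_add_distrib, ← Finset.mul_sum, ← sum_inner, hc]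
  simp

end InnerProductSpace

variable {l m n : ℕ}

lemma convex_setOf_isRep : Convex ℝ {A : Mat l m | IsRep A} := by
  rintro A ⟨hA, hAsum⟩ B ⟨hB, hBsum⟩ a b ha hb hab
  refine ⟨fun p => ?_, fun j => ?_⟩
  · simp only [PiLp.add_apply, PiLp.smul_apply, smul_eq_mul]
    constructor <;> nlinarith [hA p, hB p]
  · simp [Finset.sum_add_distrib, ← Finset.mul_sum, hAsum j, hBsum j, hab]

lemma isRep_mean [NeZero n] (A : Fin n → RepSpace l m) :
    IsRep ((n : ℝ)⁻¹ • ∑ i, (A i).1) := by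
  rw [Finset.smul_sum]
  exact convex_setOf_isRep.sum_mem (fun _ _ => by positivity) (by simp) fun i _ => (A i).2

lemma dist_perm_smul_smul (σ : Equiv.Perm (Fin l)) (A B : RepSpace l m) :
    dist (σ • A) (σ • B) = dist A B := by
  rw [Subtype.dist_eq, Subtype.dist_eq, smul_rep_def, smul_rep_def,
    EuclideanSpace.dist_eq, EuclideanSpace.dist_eq]
  congr 1
  exact Fintype.sum_equiv (Equiv.prodCongr σ⁻¹ (Equiv.refl (Fin m))) _ _ fun _ => rfl

lemma mk_eq_mk_iff_exists_perm_smul (A B : RepSpace l m) :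
    (⟦A⟧ : PSpace l m) = ⟦B⟧ ↔ ∃ σ : Equiv.Perm (Fin l), σ • B = A :=
  Quotient.eq.trans (MulAction.orbitRel_apply.trans MulAction.mem_orbit_iff)

lemma pdist_le_dist {X Y : PSpace l m} {A B : RepSpace l m} (hA : (⟦A⟧ : PSpace l m) = X)
    (hB : (⟦B⟧ : PSpace l m) = Y) : pdist X Y ≤ dist A B :=
  csInf_le ⟨0, by rintro d ⟨A, B, -, -, rfl⟩; exact dist_nonneg⟩ ⟨A, B, hA, hB, rfl⟩

lemma pdist_nonneg (X Y : PSpace l m) : 0 ≤ pdist X Y :=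
  Real.sInf_nonneg <| by rintro d ⟨A, B, -, -, rfl⟩; exact dist_nonneg

/-- Optimal alignment: since `Π` is finite, `δ(X, [B])` is attained by a representative of `X`. -/
lemma exists_mk_eq_dist_eq_pdist (X : PSpace l m) (B : RepSpace l m) :
    ∃ A : RepSpace l m, (⟦A⟧ : PSpace l m) = X ∧ dist A B = pdist X ⟦B⟧ := by
  induction X using Quotient.inductionOn with
  | h A₀ =>
    obtain ⟨σ₀, hσ₀⟩ := Finite.exists_min fun σ : Equiv.Perm (Fin l) => dist (σ • A₀) B
    have hσ₀A₀ : (⟦σ₀ • A₀⟧ : PSpace l m) = ⟦A₀⟧ := Quotient.sound ⟨σ₀, rfl⟩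
    refine ⟨σ₀ • A₀, hσ₀A₀,
      le_antisymm (le_csInf ⟨_, A₀, B, rfl, rfl, rfl⟩ ?_) (pdist_le_dist hσ₀A₀ rfl)⟩
    rintro d ⟨A, B', hA, hB', rfl⟩
    obtain ⟨ρ, rfl⟩ := (mk_eq_mk_iff_exists_perm_smul A A₀).1 hA
    obtain ⟨τ, rfl⟩ := (mk_eq_mk_iff_exists_perm_smul B' B).1 hB'
    calc dist (σ₀ • A₀) B ≤ dist ((τ⁻¹ * ρ) • A₀) B := hσ₀ _
      _ = dist (ρ • A₀) (τ • B) := by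
        rw [← dist_perm_smul_smul τ, smul_smul, mul_inv_cancel_left]

/-- The Fréchet function `F_n` of the sample `X`. -/
def frechet (X : Fin n → PSpace l m) (W : PSpace l m) : ℝ :=
  (1 / (n : ℝ)) * ∑ i, pdist (X i) W ^ 2

lemma val_eq_mean_of_isMin_frechet [NeZero n] {X : Fin n → PSpace l m} {M : PSpace l m}
    (hM : ∀ W, frechet X M ≤ frechet X W) {W : RepSpace l m}
    {A : Fin n → RepSpace l m} (hA : ∀ i, (⟦A i⟧ : PSpace l m) = X i)
    (hAW : ∀ i, dist (A i) W = pdist (X i) M) :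
    W.1 = (n : ℝ)⁻¹ • ∑ i, (A i).1 := by
  have hn : (n : ℝ) ≠ 0 := NeZero.ne _
  have hdecomp := sum_norm_sub_sq_eq_sum_norm_sub_mean_sq_add (fun i => (A i).1) W.1
  simp only [Fintype.card_fin] at hdecomp
  set c := (n : ℝ)⁻¹ • ∑ i, (A i).1
  have hFM : frechet X M = (1 / (n : ℝ)) * ∑ i, ‖(A i).1 - c‖ ^ 2 + ‖c - W.1‖ ^ 2 := by
    simp only [frechet, ← hAW, Subtype.dist_eq, dist_eq_norm]
    rw [hdecomp, mul_add, ← mul_assoc, one_div_mul_cancel hn, one_mul]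
  have hFc : frechet X ⟦⟨c, isRep_mean A⟩⟧ ≤ (1 / (n : ℝ)) * ∑ i, ‖(A i).1 - c‖ ^ 2 := by
    unfold frechet
    gcongr with i
    · exact pdist_nonneg _ _
    · simpa only [Subtype.dist_eq, dist_eq_norm] using pdist_le_dist (hA i) rfl
  have hsq : ‖c - W.1‖ ^ 2 = 0 :=
    le_antisymm (by linarith [hM ⟦⟨c, isRep_mean A⟩⟧]) (sq_nonneg _)
  exact (sub_eq_zero.1 (norm_eq_zero.1 (pow_eq_zero_iff two_ne_zero |>.1 hsq))).symm

open scoped Classical in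
theorem stmt14_general {l m n : ℕ} (hn : 1 ≤ n)
    (X : Fin n → PSpace l m) (M M' : PSpace l m)
    (hM : ∀ W : PSpace l m,
      (1 / (n : ℝ)) * ∑ i, pdist (X i) M ^ 2 ≤ (1 / (n : ℝ)) * ∑ i, pdist (X i) W ^ 2)
    (hM' : ∀ W : PSpace l m,
      (1 / (n : ℝ)) * ∑ i, pdist (X i) M' ^ 2 ≤ (1 / (n : ℝ)) * ∑ i, pdist (X i) W ^ 2) :
    ∃ A A' : Fin n → RepSpace l m,
      (∀ i, (⟦A i⟧ : PSpace l m) = X i) ∧ (∀ i, (⟦A' i⟧ : PSpace l m) = X i) ∧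
      pdist M M' ≤
        (1 / (n : ℝ)) * ∑ j ∈ Finset.univ.filter (fun j => A j ≠ A' j), dist (A j) (A' j) := by
  have : NeZero n := ⟨by omega⟩
  obtain ⟨W, rfl⟩ := Quotient.exists_rep M
  obtain ⟨W', rfl⟩ := Quotient.exists_rep M'
  choose A hA hAW using fun i => exists_mk_eq_dist_eq_pdist (X i) W
  choose A' hA' hAW' using fun i => exists_mk_eq_dist_eq_pdist (X i) W'
  refine ⟨A, A', hA, hA', ?_⟩
  rw [Finset.sum_filter_of_ne (p := fun j => A j ≠ A' j)
    fun j _ hj heq => hj (by rw [heq, dist_self])]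
  calc pdist ⟦W⟧ ⟦W'⟧ ≤ ‖W.1 - W'.1‖ := by
        simpa only [Subtype.dist_eq, dist_eq_norm] using pdist_le_dist rfl rfl
    _ = (1 / (n : ℝ)) * ‖∑ i, ((A i).1 - (A' i).1)‖ := by
        rw [val_eq_mean_of_isMin_frechet hM hA hAW,
          val_eq_mean_of_isMin_frechet hM' hA' hAW', ← smul_sub, ← Finset.sum_sub_distrib,
          norm_smul, Real.norm_of_nonneg (by positivity), one_div]
    _ ≤ (1 / (n : ℝ)) * ∑ i, dist (A i) (A' i) := by
        simp only [Subtype.dist_eq, dist_eq_norm]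
        gcongr
        exact norm_sum_le _ _

open scoped Classical in
theorem stmt14 {l m n : ℕ} (hl : 1 ≤ l) (hm : 1 ≤ m) (hn : 1 ≤ n)
    (X : Fin n → PSpace l m) (M M' : PSpace l m)
    (hM : ∀ W : PSpace l m,
      (1 / (n : ℝ)) * ∑ i, pdist (X i) M ^ 2 ≤ (1 / (n : ℝ)) * ∑ i, pdist (X i) W ^ 2)
    (hM' : ∀ W : PSpace l m,
      (1 / (n : ℝ)) * ∑ i, pdist (X i) M' ^ 2 ≤ (1 / (n : ℝ)) * ∑ i, pdist (X i) W ^ 2) :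
    ∃ A A' : Fin n → RepSpace l m,
      (∀ i, (⟦A i⟧ : PSpace l m) = X i) ∧ (∀ i, (⟦A' i⟧ : PSpace l m) = X i) ∧
      pdist M M' ≤
        (1 / (n : ℝ)) * ∑ j ∈ Finset.univ.filter (fun j => A j ≠ A' j), dist (A j) (A' j) :=
  stmt14_general hn X M M' hM hM'
end
end

section
/- Let A ∈ 𝒳 have rows a_1,…,a_ℓ. (i) For every transposition τ ∈ Π swapping rows p and q, one has ‖A − τ·A‖ = √2 · ‖a_p − a_q‖, where ‖a_p − a_q‖ is the Euclidean norm on ℝ^m. (ii) For every σ ∈ Π with σ ≠ id there exists a transposition τ ∈ Π such that ‖A − τ·A‖ ≤ ‖A − σ·A‖; consequently the minimum of ‖A − σ·A‖ over σ ∈ Π \ {id} is attained at a transposition. -/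
open scoped BigOperators
open MeasureTheory

noncomputable section

/-! Since `‖A - σ • A‖² = ∑ₖ ‖aₖ - a_{σ⁻¹ k}‖²`, a transposition `(p q)` contributes exactly the
two terms `2 ‖a_p - a_q‖²`. For `σ ≠ 1`, let `p` minimise `‖aₖ - a_{σ⁻¹ k}‖²` over the points moved
by `σ⁻¹`; then `σ⁻¹ p` is moved too, so the sum has two distinct terms that are each at least the
minimum, and it dominates the transposition `(p σ⁻¹p)`. -/

theorem Equiv.Perm.exists_apply_ne_two_nsmul_le_sum {α M : Type*} [Fintype α]
    [AddCommMonoid M] [LinearOrder M] [IsOrderedAddMonoid M] {σ : Equiv.Perm α} (hσ : σ ≠ 1)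
    {f : α → M} (hf : ∀ k, 0 ≤ f k) : ∃ p, σ p ≠ p ∧ 2 • f p ≤ ∑ k, f k := by
  classical
  have hsupp : σ.support.Nonempty :=
    Finset.nonempty_iff_ne_empty.mpr (mt Equiv.Perm.support_eq_empty_iff.mp hσ)
  obtain ⟨p, hp, hmin⟩ := σ.support.exists_min_image f hsupp
  have hσp : σ p ∈ σ.support := Equiv.Perm.apply_mem_support.mpr hp
  have hne : σ p ≠ p := Equiv.Perm.mem_support.mp hp
  refine ⟨p, hne, ?_⟩
  calc 2 • f p ≤ f p + f (σ p) := by rw [two_nsmul]; exact add_le_add_right (hmin _ hσp) _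
    _ = ∑ k ∈ {p, σ p}, f k := (Finset.sum_pair hne.symm).symm
    _ ≤ ∑ k, f k :=
      Finset.sum_le_sum_of_subset_of_nonneg (Finset.subset_univ _) fun k _ _ => hf k

section RowDistances

variable {l m : ℕ} (A : RepSpace l m)

theorem dist_smul_sq (σ : Equiv.Perm (Fin l)) :
    dist A (σ • A) ^ 2 = ∑ k, dist (rowOf A k) (rowOf A (σ⁻¹ k)) ^ 2 := by
  rw [Subtype.dist_eq, smul_rep_def, EuclideanSpace.dist_eq, Real.sq_sqrt (by positivity),
    Fintype.sum_prod_type]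
  refine Finset.sum_congr rfl fun k _ => ?_
  rw [EuclideanSpace.dist_eq, Real.sq_sqrt (by positivity)]
  rfl

theorem dist_swap_smul_sq (p q : Fin l) :
    dist A (Equiv.swap p q • A) ^ 2 = 2 * dist (rowOf A p) (rowOf A q) ^ 2 := by
  rcases eq_or_ne p q with rfl | hpq
  · simp [Equiv.swap_self, ← Equiv.Perm.one_def]
  rw [dist_smul_sq, Fintype.sum_eq_add p q hpq fun k hk => by
    simp [Equiv.swap_apply_of_ne_of_ne hk.1 hk.2]]
  simp [dist_comm (rowOf A q), two_mul]

theorem dist_swap_smul (p q : Fin l) :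
    dist A (Equiv.swap p q • A) = √2 * dist (rowOf A p) (rowOf A q) := by
  rw [← Real.sqrt_sq dist_nonneg, dist_swap_smul_sq, Real.sqrt_mul zero_le_two,
    Real.sqrt_sq dist_nonneg]

theorem exists_dist_swap_smul_le {σ : Equiv.Perm (Fin l)} (hσ : σ ≠ 1) :
    ∃ p q : Fin l, p ≠ q ∧ dist A (Equiv.swap p q • A) ≤ dist A (σ • A) := by
  obtain ⟨p, hp, hle⟩ := Equiv.Perm.exists_apply_ne_two_nsmul_le_sum (inv_ne_one.mpr hσ)
    fun k => sq_nonneg (dist (rowOf A k) (rowOf A (σ⁻¹ k)))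
  refine ⟨p, σ⁻¹ p, hp.symm, ?_⟩
  rw [← sq_le_sq₀ dist_nonneg dist_nonneg, dist_swap_smul_sq, dist_smul_sq, two_mul, ← two_nsmul]
  exact hle

theorem finite_setOf_dist_smul_of_ne_one :
    {d | ∃ σ : Equiv.Perm (Fin l), σ ≠ 1 ∧ d = dist A (σ • A)}.Finite :=
  (Set.finite_range fun σ : Equiv.Perm (Fin l) => dist A (σ • A)).subset
    fun _ ⟨σ, _, hd⟩ => ⟨σ, hd.symm⟩

theorem alpha_le_dist_smul {σ : Equiv.Perm (Fin l)} (hσ : σ ≠ 1) :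
    alpha A ≤ dist A (σ • A) :=
  csInf_le (finite_setOf_dist_smul_of_ne_one A).bddBelow ⟨σ, hσ, rfl⟩

theorem exists_dist_smul_eq_alpha (hl : 2 ≤ l) :
    ∃ σ : Equiv.Perm (Fin l), σ ≠ 1 ∧ dist A (σ • A) = alpha A := by
  have h01 : (⟨0, by omega⟩ : Fin l) ≠ ⟨1, by omega⟩ := by simp [Fin.ext_iff]
  have hne : {d | ∃ σ : Equiv.Perm (Fin l), σ ≠ 1 ∧ d = dist A (σ • A)}.Nonempty :=
    ⟨_, _, mt Equiv.swap_eq_one_iff.mp h01, rfl⟩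
  obtain ⟨σ, hσ, hd⟩ := hne.csInf_mem (finite_setOf_dist_smul_of_ne_one A)
  exact ⟨σ, hσ, hd.symm⟩

end RowDistances

theorem stmt19_general {l m : ℕ} (hl : 2 ≤ l) (A : RepSpace l m) :
    (∀ p q : Fin l, p ≠ q →
        dist A (Equiv.swap p q • A) = Real.sqrt 2 * dist (rowOf A p) (rowOf A q)) ∧
    (∀ σ : Equiv.Perm (Fin l), σ ≠ 1 →
        ∃ p q : Fin l, p ≠ q ∧ dist A (Equiv.swap p q • A) ≤ dist A (σ • A)) ∧
    (∃ p q : Fin l, p ≠ q ∧ dist A (Equiv.swap p q • A) = alpha A) := by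
  refine ⟨fun p q _ => dist_swap_smul A p q, fun σ hσ => exists_dist_swap_smul_le A hσ, ?_⟩
  obtain ⟨σ, hσ, hα⟩ := exists_dist_smul_eq_alpha A hl
  obtain ⟨p, q, hpq, hle⟩ := exists_dist_swap_smul_le A hσ
  exact ⟨p, q, hpq, le_antisymm (hα ▸ hle)
    (alpha_le_dist_smul A (mt Equiv.swap_eq_one_iff.mp hpq))⟩

theorem stmt19 {l m : ℕ} (hl : 2 ≤ l) (hm : 1 ≤ m) (A : RepSpace l m) :
    (∀ p q : Fin l, p ≠ q →
        dist A (Equiv.swap p q • A) = Real.sqrt 2 * dist (rowOf A p) (rowOf A q)) ∧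
    (∀ σ : Equiv.Perm (Fin l), σ ≠ 1 →
        ∃ p q : Fin l, p ≠ q ∧ dist A (Equiv.swap p q • A) ≤ dist A (σ • A)) ∧
    (∃ p q : Fin l, p ≠ q ∧ dist A (Equiv.swap p q • A) = alpha A) :=
  stmt19_general hl A

end
end
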